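/- arXiv:2207.03250 — 2 statements merged into one kernel-verified Lean document; each statement's English description precedes it below -/
import Mathlib

section
/- For every positive integer $i$, $\sum_{k=1}^{\infty} \frac{H_k}{k(i+k)} = \frac{\zeta(2)}{i} + \frac{H_i^2}{2i} + \frac{H_i^{(2)}}{2i} - \frac{H_i}{i^2}$. -/
open Real

noncomputable def H (n k : ℕ) : ℝ := ∑ i ∈ Finset.Icc 1 k, 1 / (i : ℝ) ^ n

noncomputable def h (n k : ℕ) : ℝ := ∑ i ∈ Finset.Icc 1 k, 1 / (2 * (i : ℝ) - 1) ^ n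

noncomputable def zeta (s : ℕ) : ℝ := ∑' n : ℕ, 1 / ((n : ℝ) + 1) ^ s

/-!
Write `S_i = ∑ H_k / (k (k + i))`. For `i = 1` the summand is `H_k / k - H_k / (k + 1)`, and
Abel summation telescopes the partial sums to `H^{(2)}_N - H_N / (N + 1) → ζ(2)`. In general
`(i + 1) / (k (k + i + 1)) - i / (k (k + i)) = 1 / (k + i) - 1 / (k + i + 1)`, so Abel summation
gives `(i + 1) S_{i+1} = i S_i + H_i / i`; the boundary terms vanish since `H_N = O(log N)`.
The closed form satisfies the same recursion.
-/

open Filter Topology Finset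

lemma H_zero (n : ℕ) : H n 0 = 0 := by simp [H]

lemma H_succ (n N : ℕ) : H n (N + 1) = H n N + 1 / ((N : ℝ) + 1) ^ n := by
  rw [H, sum_Icc_succ_top (Nat.le_add_left 1 N), ← H]
  push_cast
  rfl

lemma H_nonneg (n N : ℕ) : 0 ≤ H n N := by unfold H; positivity

lemma H_one_eq_harmonic (N : ℕ) : H 1 N = harmonic N := by
  simp [H, harmonic_eq_sum_Icc]

lemma tendsto_H_two_atTop : Tendsto (H 2) atTop (𝓝 (π ^ 2 / 6)) := by
  have hsum : ∀ N, ∑ k ∈ range (N + 1), 1 / (k : ℝ) ^ 2 = H 2 N := by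
    intro N
    induction N with
    | zero => simp [H_zero]
    | succ N ih => rw [sum_range_succ, ih, H_succ]; push_cast; rfl
  simpa only [Function.comp_def, hsum] using
    hasSum_zeta_two.tendsto_sum_nat.comp (tendsto_add_atTop_nat 1)

lemma tendsto_one_div_add_atTop (c : ℝ) :
    Tendsto (fun N : ℕ => 1 / ((N : ℝ) + c)) atTop (𝓝 0) := by
  simp only [one_div]
  exact (tendsto_atTop_add_const_right atTop c tendsto_natCast_atTop_atTop).inv_tendsto_atTop

lemma tendsto_H_one_add_sub_H_one (i : ℕ) :
    Tendsto (fun N : ℕ => H 1 (N + i) - H 1 N) atTop (𝓝 0) := by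
  induction i with
  | zero => simp
  | succ i ih =>
    have hlim := ih.add (tendsto_one_div_add_atTop ((i : ℝ) + 1))
    rw [add_zero] at hlim
    refine hlim.congr fun N => ?_
    rw [← add_assoc N, H_succ]
    push_cast
    ring

lemma tendsto_H_one_div_add_atTop {c : ℝ} (hc : 0 < c) :
    Tendsto (fun N : ℕ => H 1 N / ((N : ℝ) + c)) atTop (𝓝 0) := by
  have hlog : Tendsto (fun N : ℕ => (1 + log N) / ((N : ℝ) + c)) atTop (𝓝 0) := by
    have hlim := (tendsto_one_div_add_atTop c).add
      ((tendsto_pow_log_div_mul_add_atTop 1 c 1 one_ne_zero).comp tendsto_natCast_atTop_atTop)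
    rw [add_zero] at hlim
    refine hlim.congr fun N => ?_
    simp only [Function.comp, pow_one, one_mul]
    ring
  refine squeeze_zero (fun N => div_nonneg (H_nonneg 1 N) (by positivity)) (fun N => ?_) hlog
  gcongr
  rw [H_one_eq_harmonic]
  exact_mod_cast harmonic_le_one_add_log N

noncomputable def eulerPartialSum (i N : ℕ) : ℝ :=
  ∑ k ∈ range N, H 1 (k + 1) / (((k : ℝ) + 1) * ((i : ℝ) + ((k : ℝ) + 1)))

noncomputable def eulerSumValue (i : ℕ) : ℝ :=
  (π ^ 2 / 6) / i + H 1 i ^ 2 / (2 * i) + H 2 i / (2 * i) - H 1 i / (i : ℝ) ^ 2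

lemma eulerPartialSum_succ (i N : ℕ) :
    eulerPartialSum i (N + 1) =
      eulerPartialSum i N + H 1 (N + 1) / (((N : ℝ) + 1) * ((i : ℝ) + ((N : ℝ) + 1))) :=
  sum_range_succ _ _

lemma eulerPartialSum_one (N : ℕ) : eulerPartialSum 1 N = H 2 N - H 1 N / ((N : ℝ) + 1) := by
  induction N with
  | zero => simp [eulerPartialSum, H_zero]
  | succ N ih =>
    rw [eulerPartialSum_succ, ih, H_succ, H_succ]
    push_cast
    field_simp
    ring

lemma succ_mul_eulerPartialSum_succ {i : ℕ} (hi : 0 < i) (N : ℕ) :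
    ((i : ℝ) + 1) * eulerPartialSum (i + 1) N = i * eulerPartialSum i N +
      ((H 1 i - (H 1 (N + i) - H 1 N)) / i - H 1 N / ((N : ℝ) + 1 + i)) := by
  have hi' : (0 : ℝ) < i := by exact_mod_cast hi
  induction N with
  | zero => simp [eulerPartialSum, H_zero]
  | succ N ih =>
    rw [eulerPartialSum_succ, eulerPartialSum_succ, add_right_comm N 1 i, H_succ 1 (N + i),
      H_succ 1 N]
    push_cast at ih ⊢
    linear_combination (norm := skip) ih
    field_simp
    ring

lemma eulerSumValue_succ {i : ℕ} (hi : 0 < i) :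
    eulerSumValue (i + 1) = (i * eulerSumValue i + H 1 i / i) / ((i : ℝ) + 1) := by
  have hi' : (i : ℝ) ≠ 0 := by exact_mod_cast hi.ne'
  rw [eulerSumValue, eulerSumValue, H_succ, H_succ]
  push_cast
  field_simp
  ring

lemma tendsto_eulerPartialSum {i : ℕ} (hi : 0 < i) :
    Tendsto (eulerPartialSum i) atTop (𝓝 (eulerSumValue i)) := by
  induction i, hi using Nat.le_induction with
  | base =>
    have hval : eulerSumValue 1 = π ^ 2 / 6 := by
      norm_num [eulerSumValue, H]
      ring
    have hlim := tendsto_H_two_atTop.sub (tendsto_H_one_div_add_atTop one_pos)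
    rw [sub_zero, ← hval] at hlim
    exact hlim.congr fun N => (eulerPartialSum_one N).symm
  | succ i hi ih =>
    have hcorr : Tendsto (fun N : ℕ =>
        (H 1 i - (H 1 (N + i) - H 1 N)) / i - H 1 N / ((N : ℝ) + 1 + i))
        atTop (𝓝 (H 1 i / i)) := by
      have hlim := (((tendsto_const_nhds (x := H 1 i)).sub
        (tendsto_H_one_add_sub_H_one i)).div_const (i : ℝ)).sub
        (tendsto_H_one_div_add_atTop (c := 1 + (i : ℝ)) (by positivity))
      rw [sub_zero, sub_zero] at hlim
      refine hlim.congr fun N => ?_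
      ring
    rw [eulerSumValue_succ hi]
    refine (((ih.const_mul (i : ℝ)).add hcorr).div_const ((i : ℝ) + 1)).congr fun N => ?_
    rw [← succ_mul_eulerPartialSum_succ hi, mul_div_cancel_left₀ _ (by positivity)]

theorem stmt4 (i : ℕ) (hi : 0 < i) :
    ∑' k : ℕ, H 1 (k + 1) / (((k : ℝ) + 1) * ((i : ℝ) + ((k : ℝ) + 1))) =
      (π ^ 2 / 6) / i + H 1 i ^ 2 / (2 * i) + H 2 i / (2 * i) - H 1 i / (i : ℝ) ^ 2 := by
  have hnonneg : ∀ k : ℕ, 0 ≤ H 1 (k + 1) / (((k : ℝ) + 1) * ((i : ℝ) + ((k : ℝ) + 1))) :=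
    fun k => div_nonneg (H_nonneg 1 (k + 1)) (by positivity)
  exact ((hasSum_iff_tendsto_nat_of_nonneg hnonneg _).mpr (tendsto_eulerPartialSum hi)).tsum_eq
end

section
/- $\sum_{k=1}^{\infty} \left( \frac{h_k^{(3)}}{(2k-1)^5} + \frac{h_k^{(5)}}{(2k-1)^3} \right) = \frac{255}{256}\zeta(8) + \frac{217}{256}\zeta(3)\zeta(5)$. -/
open Real

/-!
With `a k = (2k+1)⁻³` and `b k = (2k+1)⁻⁵`, the summand is `A k * b k + B k * a k`, where `A`, `B`
are the partial sums up to `k`. Summed over `k`, these terms cover every pair `(j, k)` of the square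
once off the diagonal and twice on it, so the series equals `(∑ a) (∑ b) + ∑ a b`. Each of the three
odd-index series is `(1 - 2⁻ˢ) ζ(s)`, obtained by splitting `ζ(s)` into odd and even terms.
-/

open Finset

lemma sum_range_partialSum_mul_add (a b : ℕ → ℝ) (n : ℕ) :
    ∑ k ∈ range n, ((∑ j ∈ range (k + 1), a j) * b k + (∑ j ∈ range (k + 1), b j) * a k) =
      (∑ k ∈ range n, a k) * (∑ k ∈ range n, b k) + ∑ k ∈ range n, a k * b k := by
  induction n with
  | zero => simp
  | succ n ih =>
    simp only [sum_range_succ _ n, ih]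
    ring

lemma hasSum_partialSum_mul_add {a b : ℕ → ℝ} (ha₀ : ∀ k, 0 ≤ a k) (hb₀ : ∀ k, 0 ≤ b k)
    (ha : Summable a) (hb : Summable b) :
    HasSum (fun k => (∑ j ∈ range (k + 1), a j) * b k + (∑ j ∈ range (k + 1), b j) * a k)
      ((∑' k, a k) * (∑' k, b k) + ∑' k, a k * b k) := by
  have hab : Summable fun k => a k * b k :=
    (ha.mul_right (∑' k, b k)).of_nonneg_of_le (fun k => mul_nonneg (ha₀ k) (hb₀ k))
      fun k => mul_le_mul_of_nonneg_left (hb.le_tsum k fun j _ => hb₀ j) (ha₀ k)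
  have hA₀ (k : ℕ) : 0 ≤ ∑ j ∈ range (k + 1), a j := sum_nonneg fun j _ => ha₀ j
  have hB₀ (k : ℕ) : 0 ≤ ∑ j ∈ range (k + 1), b j := sum_nonneg fun j _ => hb₀ j
  rw [hasSum_iff_tendsto_nat_of_nonneg fun k =>
    add_nonneg (mul_nonneg (hA₀ k) (hb₀ k)) (mul_nonneg (hB₀ k) (ha₀ k))]
  simp only [sum_range_partialSum_mul_add]
  exact (ha.hasSum.tendsto_sum_nat.mul hb.hasSum.tendsto_sum_nat).add hab.hasSum.tendsto_sum_nat

lemma hasSum_one_div_two_mul_add_one_pow {s : ℕ} (hs : 2 ≤ s) :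
    HasSum (fun k : ℕ => 1 / (2 * (k : ℝ) + 1) ^ s) ((1 - (1 / 2) ^ s) * zeta s) := by
  have hζ : Summable fun n : ℕ => 1 / ((n : ℝ) + 1) ^ s := by
    simpa using (summable_nat_add_iff 1).mpr (summable_one_div_nat_pow.mpr hs)
  have hodd : HasSum (fun k : ℕ => 1 / (((2 * k + 1 : ℕ) : ℝ) + 1) ^ s) ((1 / 2) ^ s * zeta s) := by
    refine (hζ.hasSum.mul_left ((1 / 2) ^ s)).congr_fun fun k => ?_
    push_cast
    rw [show (2 * (k : ℝ) + 1 + 1) = 2 * (k + 1) by ring, mul_pow, one_div_pow, one_div_mul_one_div]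
  have heven : Summable fun k : ℕ => 1 / (((2 * k : ℕ) : ℝ) + 1) ^ s :=
    hζ.comp_injective (mul_right_injective₀ (two_ne_zero' ℕ))
  have hsplit :=
    (HasSum.even_add_odd (f := fun n : ℕ => 1 / ((n : ℝ) + 1) ^ s) heven.hasSum hodd).tsum_eq
  rw [← zeta] at hsplit
  convert heven.hasSum using 1
  · push_cast; rfl
  · linarith

lemma h_succ_eq_sum_range (n k : ℕ) :
    h n (k + 1) = ∑ j ∈ range (k + 1), 1 / (2 * (j : ℝ) + 1) ^ n := by
  rw [h, ← Ico_add_one_right_eq_Icc, sum_Ico_eq_sum_range]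
  refine sum_congr rfl fun j _ => ?_
  push_cast
  ring_nf

theorem stmt13 :
    ∑' k : ℕ, (h 3 (k + 1) / (2 * ((k : ℝ) + 1) - 1) ^ 5 + h 5 (k + 1) / (2 * ((k : ℝ) + 1) - 1) ^ 3) =
      255 / 256 * zeta 8 + 217 / 256 * zeta 3 * zeta 5 := by
  set a : ℕ → ℕ → ℝ := fun s k => 1 / (2 * (k : ℝ) + 1) ^ s with ha
  have hterm (k : ℕ) :
      h 3 (k + 1) / (2 * ((k : ℝ) + 1) - 1) ^ 5 + h 5 (k + 1) / (2 * ((k : ℝ) + 1) - 1) ^ 3 =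
        (∑ j ∈ range (k + 1), a 3 j) * a 5 k + (∑ j ∈ range (k + 1), a 5 j) * a 3 k := by
    rw [h_succ_eq_sum_range, h_succ_eq_sum_range]
    ring
  have ha₀ (s k : ℕ) : 0 ≤ a s k := by positivity
  have hprod (k : ℕ) : a 3 k * a 5 k = a 8 k := by
    simp only [ha, one_div_mul_one_div, ← pow_add]
  have h3 := hasSum_one_div_two_mul_add_one_pow (s := 3) (by norm_num)
  have h5 := hasSum_one_div_two_mul_add_one_pow (s := 5) (by norm_num)
  have h8 := hasSum_one_div_two_mul_add_one_pow (s := 8) (by norm_num)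
  rw [tsum_congr hterm, (hasSum_partialSum_mul_add (ha₀ 3) (ha₀ 5) h3.summable h5.summable).tsum_eq,
    tsum_congr hprod, h3.tsum_eq, h5.tsum_eq, h8.tsum_eq]
  ring
end
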